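/- Let p, q be coprime positive integers with q ≥ 2, σ ∈ ℝ, α = 2πp/q, and define T(z) = e^{iα}(z + σ + 1) for Im(z) > 0 and T(z) = e^{iα}(z + σ − 1) for Im(z) ≤ 0. Then for every z ∈ ℂ there exist signs ε₀, …, ε_{q−1} ∈ {−1, +1} such that T^q(z) = z + Σ_{k=0}^{q−1} ε_k e^{i(q−k)α}. In particular |T^q(z) − z| ≤ q for all z. -/

import Mathlib

/-!
Write `T w = e (w + σ + s(w))` with `s(w) = ±1` the sign of `Im w`. Unrolling `q` steps gives
`T^q z = e^q z + Σ_{k<q} e^{q-k} (σ + s(T^k z))`. Since `e = exp(2πi p/q)` is a primitive `q`-th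
root of unity, `e^q = 1` and `Σ_{k<q} e^{q-k} = 0`, so only the signed roots of unity survive.
-/

open Finset

theorem iterate_eq_pow_mul_add_sum {R : Type*} [CommSemiring R] {f c : R → R} {ζ : R}
    (hf : ∀ w, f w = ζ * (w + c w)) (z : R) (n : ℕ) :
    f^[n] z = ζ ^ n * z + ∑ k ∈ range n, ζ ^ (n - k) * c (f^[k] z) := by
  induction n with
  | zero => simp
  | succ n ih =>
    have hshift : ∑ k ∈ range n, ζ ^ (n + 1 - k) * c (f^[k] z)
        = ζ * ∑ k ∈ range n, ζ ^ (n - k) * c (f^[k] z) := by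
      rw [mul_sum]
      refine sum_congr rfl fun k hk => ?_
      rw [Nat.sub_add_comm (mem_range.1 hk).le, pow_succ]
      ring
    rw [Function.iterate_succ_apply', hf, sum_range_succ, hshift, Nat.add_sub_cancel_left]
    nth_rw 1 [ih]
    ring

namespace IsPrimitiveRoot

variable {R : Type*} [CommRing R] [IsDomain R] {ζ : R} {q : ℕ}

theorem sum_range_pow_sub_eq_zero (hζ : IsPrimitiveRoot ζ q) (hq : 1 < q) :
    ∑ k ∈ range q, ζ ^ (q - k) = 0 := by
  rw [← sum_range_reflect]
  calc ∑ k ∈ range q, ζ ^ (q - (q - 1 - k)) = ζ * ∑ k ∈ range q, ζ ^ k := by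
        rw [mul_sum]
        refine sum_congr rfl fun k hk => ?_
        rw [show q - (q - 1 - k) = k + 1 by have := mem_range.1 hk; omega, pow_succ']
    _ = 0 := by rw [hζ.geom_sum_eq_zero hq, mul_zero]

theorem iterate_eq_add_sum (hζ : IsPrimitiveRoot ζ q) (hq : 1 < q) {f s : R → R} {a : R}
    (hf : ∀ w, f w = ζ * (w + a + s w)) (z : R) :
    f^[q] z = z + ∑ k ∈ range q, s (f^[k] z) * ζ ^ (q - k) := by
  have hf' : ∀ w, f w = ζ * (w + (a + s w)) := fun w => by rw [hf, add_assoc]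
  have hsplit : ∑ k ∈ range q, ζ ^ (q - k) * (a + s (f^[k] z))
      = a * ∑ k ∈ range q, ζ ^ (q - k) + ∑ k ∈ range q, s (f^[k] z) * ζ ^ (q - k) := by
    rw [mul_sum, ← sum_add_distrib]
    exact sum_congr rfl fun k _ => by ring
  rw [iterate_eq_pow_mul_add_sum hf', hζ.pow_eq_one, one_mul, hsplit,
    hζ.sum_range_pow_sub_eq_zero hq, mul_zero, zero_add]

end IsPrimitiveRoot

theorem norm_sum_sign_mul_pow_le {n : ℕ} {ζ : ℂ} (hζ : ‖ζ‖ = 1) (ε : Fin n → ℝ)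
    (hε : ∀ k, ε k = 1 ∨ ε k = -1) (m : Fin n → ℕ) :
    ‖∑ k, (ε k : ℂ) * ζ ^ m k‖ ≤ n := by
  have hterm : ∀ k ∈ (univ : Finset (Fin n)), ‖(ε k : ℂ) * ζ ^ m k‖ ≤ 1 := fun k _ => by
    rcases hε k with h | h <;> simp [h, hζ]
  simpa using norm_sum_le_of_le univ hterm

theorem stmt5_general (p q : ℕ) (hq : 2 ≤ q) (hpq : Nat.Coprime p q)
    (σ : ℝ) (z : ℂ) :
    let α : ℝ := 2 * Real.pi * p / q
    let e : ℂ := Complex.exp ((α : ℂ) * Complex.I)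
    let T : ℂ → ℂ := fun w => if 0 < w.im then e * (w + σ + 1) else e * (w + σ - 1)
    (∃ ε : Fin q → ℝ, (∀ k, ε k = 1 ∨ ε k = -1) ∧
      T^[q] z = z + ∑ k : Fin q,
        (ε k : ℂ) * Complex.exp (((q - k.val : ℕ) : ℂ) * (α : ℂ) * Complex.I)) ∧
    ‖T^[q] z - z‖ ≤ q := by
  intro α e T
  have he : IsPrimitiveRoot e q := by
    convert Complex.isPrimitiveRoot_exp_of_coprime p q (by omega) hpq using 2
    simp only [α]
    push_cast
    ring
  have hT : ∀ w, T w = e * (w + σ + ((if 0 < w.im then 1 else -1 : ℝ) : ℂ)) := fun w => by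
    simp only [T]
    split_ifs <;> push_cast <;> ring
  set ε : ℕ → ℝ := fun k => if 0 < (T^[k] z).im then 1 else -1
  have hε : ∀ k, ε k = 1 ∨ ε k = -1 := fun k => by
    by_cases h : 0 < (T^[k] z).im <;> simp [ε, h]
  have hexp : ∀ k : Fin q,
      Complex.exp (((q - k.val : ℕ) : ℂ) * (α : ℂ) * Complex.I) = e ^ (q - k.val) := fun k => by
    rw [mul_assoc, Complex.exp_nat_mul]
  have hTq : T^[q] z = z + ∑ k : Fin q, (ε k : ℂ) * e ^ (q - k.val) := by
    rw [he.iterate_eq_add_sum (by omega) hT, ← Fin.sum_univ_eq_sum_range]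
  simp only [hexp]
  refine ⟨⟨fun k => ε k, fun k => hε k, hTq⟩, ?_⟩
  rw [hTq, add_sub_cancel_left]
  exact norm_sum_sign_mul_pow_le (he.norm'_eq_one (by omega)) _ (fun k => hε k) _

theorem stmt5 (p q : ℕ) (hp : 0 < p) (hq : 2 ≤ q) (hpq : Nat.Coprime p q)
    (σ : ℝ) (z : ℂ) :
    let α : ℝ := 2 * Real.pi * p / q
    let e : ℂ := Complex.exp ((α : ℂ) * Complex.I)
    let T : ℂ → ℂ := fun w => if 0 < w.im then e * (w + σ + 1) else e * (w + σ - 1)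
    (∃ ε : Fin q → ℝ, (∀ k, ε k = 1 ∨ ε k = -1) ∧
      T^[q] z = z + ∑ k : Fin q,
        (ε k : ℂ) * Complex.exp (((q - k.val : ℕ) : ℂ) * (α : ℂ) * Complex.I)) ∧
    ‖T^[q] z - z‖ ≤ q :=
  stmt5_general p q hq hpq σ z
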